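/- Two pointed full-dimensional closed convex cones A, B ⊆ ℝ³ with the same apex o satisfy: if the intersection of their boundaries ∂A ∩ ∂B is contained in {o}, then A ⊆ B or B ⊆ A or A ∩ B = {o}. -/

import Mathlib

/-!
Translate the common apex to `0`. If the cones were neither nested nor meeting only at `0`, they
would share an interior point `w`. Walking from a point of `A \ B` to `w` one crosses `∂B` inside
`int A`; symmetrically one meets `∂A` inside `int B`. Both crossing points lie on
`∂(A ∩ B) \ {0}`, which is connected: an interior point of the dual cone gives a linear form `f`
with `f x ≥ c ‖x‖` on the cone, the slice `f = 1` of the cone is a compact convex disc, and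
`∂(A ∩ B) \ {0}` is the cone over the boundary circle of that disc. Since `∂A ∩ ∂B ⊆ {0}`, this
connected set splits into the nonempty relatively open parts off `∂A` and off `∂B`.
-/

open Set Module Metric Bornology Filter Topology Pointwise
open scoped RealInnerProductSpace

/-- A solid cone with apex `o` in `ℝ³`: a closed convex set with nonempty
interior, stable under nonnegative dilations about `o`, and pointed (it
contains no line through `o`: `x` and its reflection `2o - x` both belong to
it only for `x = o`). -/
def IsSolidPointedCone (o : EuclideanSpace ℝ (Fin 3))
    (C : Set (EuclideanSpace ℝ (Fin 3))) : Prop :=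
  IsClosed C ∧ Convex ℝ C ∧ (interior C).Nonempty ∧
    (∀ x ∈ C, ∀ t : ℝ, 0 ≤ t → o + t • (x - o) ∈ C) ∧
    (∀ x ∈ C, (2 : ℝ) • o - x ∈ C → x = o)

section Topology

variable {X : Type*} [TopologicalSpace X]

theorem IsPreconnected.inter_frontier_nonempty {s t : Set X} (hs : IsPreconnected s)
    (hst : (s ∩ t).Nonempty) (hst' : (s \ t).Nonempty) : (s ∩ frontier t).Nonempty := by
  by_contra h
  have hcover : s ⊆ interior t ∪ (closure t)ᶜ := fun x hxs => by
    by_cases hxt : x ∈ closure t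
    · by_contra hx
      exact h ⟨x, hxs, hxt, fun hi => hx (Or.inl hi)⟩
    · exact Or.inr hxt
  rcases hs.subset_or_subset isOpen_interior isClosed_closure.isOpen_compl
      (disjoint_compl_right_iff_subset.2 interior_subset_closure) hcover with h' | h'
  · obtain ⟨x, hxs, hxt⟩ := hst'
    exact hxt (interior_subset (h' hxs))
  · obtain ⟨x, hxs, hxt⟩ := hst
    exact h' hxs (subset_closure hxt)

theorem interior_inter_frontier_subset_frontier_inter (s t : Set X) :
    interior s ∩ frontier t ⊆ frontier (s ∩ t) := fun _ ⟨hs, ht⟩ =>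
  ⟨closure_mono (inter_subset_inter_left _ interior_subset)
      (isOpen_interior.inter_closure ⟨hs, ht.1⟩),
    fun hi => ht.2 (interior_mono inter_subset_right hi)⟩

theorem interior_inter_frontier_subset_or_frontier_inter_interior_subset {A B : Set X} {o : X}
    (hpre : IsPreconnected (frontier (A ∩ B) \ {o})) (hbd : frontier A ∩ frontier B ⊆ {o}) :
    interior A ∩ frontier B ⊆ {o} ∨ frontier A ∩ interior B ⊆ {o} := by
  by_contra! h
  obtain ⟨⟨p, hp, hpo⟩, ⟨q, hq, hqo⟩⟩ := And.imp not_subset.1 not_subset.1 h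
  have hcover : frontier (A ∩ B) \ {o} ⊆ (frontier A)ᶜ ∪ (frontier B)ᶜ := fun z hz => by
    by_contra! hz'
    exact hz.2 (hbd (by simpa using hz'))
  have hpA : p ∉ frontier A := disjoint_left.1 disjoint_interior_frontier hp.1
  have hqB : q ∉ frontier B := disjoint_left.1 disjoint_interior_frontier hq.2
  have hpAB : p ∈ frontier (A ∩ B) := interior_inter_frontier_subset_frontier_inter A B hp
  have hqAB : q ∈ frontier (A ∩ B) := by
    rw [inter_comm]; exact interior_inter_frontier_subset_frontier_inter B A ⟨hq.2, hq.1⟩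
  obtain ⟨z, ⟨hz, -⟩, hzA, hzB⟩ := hpre _ _ isClosed_frontier.isOpen_compl
    isClosed_frontier.isOpen_compl hcover ⟨p, ⟨hpAB, hpo⟩, hpA⟩ ⟨q, ⟨hqAB, hqo⟩, hqB⟩
  rcases frontier_inter_subset A B hz with h | h
  · exact hzA h.1
  · exact hzB h.2

end Topology

section Convex

variable {E : Type*} [AddCommGroup E] [Module ℝ E] [TopologicalSpace E] [IsTopologicalAddGroup E]
  [ContinuousSMul ℝ E]

theorem Convex.interior_inter_interior_nonempty {A B : Set E} (hB : Convex ℝ B)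
    (hBi : (interior B).Nonempty) {x : E} (hx : x ∈ interior A ∩ B) :
    (interior A ∩ interior B).Nonempty := by
  have : x ∈ closure (interior B) := by
    rw [hB.closure_interior_eq_closure_of_nonempty_interior hBi]
    exact subset_closure hx.2
  exact mem_closure_iff.1 this _ isOpen_interior hx.1

theorem Convex.interior_inter_frontier_nonempty {A B : Set E} (hA : Convex ℝ A)
    (hB : IsClosed B) {a w : E} (ha : a ∈ A) (haB : a ∉ B) (hw : w ∈ interior A ∩ B) :
    (interior A ∩ frontier B).Nonempty := by
  obtain ⟨y, hy, hyB⟩ := (convex_segment a w).isPreconnected.inter_frontier_nonempty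
    ⟨w, right_mem_segment ℝ a w, hw.2⟩ ⟨a, left_mem_segment ℝ a w, haB⟩
  have hya : y ≠ a := fun h => haB (h ▸ hB.frontier_subset hyB)
  refine ⟨y, ?_, hyB⟩
  rcases eq_or_ne y w with rfl | hyw
  · exact hw.1
  · exact hA.openSegment_self_interior_subset_interior ha hw.1
      (mem_openSegment_of_ne_left_right hya.symm hyw.symm hy)

end Convex

theorem Convex.isPreconnected_frontier {E : Type*} [NormedAddCommGroup E] [NormedSpace ℝ E]
    (hE : 1 < Module.rank ℝ E) {s : Set E} (hs : Convex ℝ s) (hsi : (interior s).Nonempty)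
    (hsb : IsBounded s) : IsPreconnected (frontier s) := by
  obtain ⟨h, -, -, hfr⟩ := exists_homeomorph_image_interior_closure_frontier_eq_unitBall hs hsi hsb
  have hfr' : frontier s = h.symm '' sphere 0 1 := by
    rw [← hfr]; exact (h.toEquiv.symm_image_image _).symm
  rw [hfr']
  exact (isPreconnected_sphere hE 0 1).image _ h.symm.continuous.continuousOn

section Slice

variable {E : Type*} [NormedAddCommGroup E] [NormedSpace ℝ E]

theorem smul_mem_interior_of_forall_smul_mem {C : Set E}
    (hsmul : ∀ x ∈ C, ∀ t : ℝ, 0 ≤ t → t • x ∈ C) {x : E} (hx : x ∈ interior C) {t : ℝ}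
    (ht : 0 < t) : t • x ∈ interior C := by
  have hsub : t • C ⊆ C := by
    rintro _ ⟨y, hy, rfl⟩
    exact hsmul y hy t ht.le
  exact interior_mono hsub ((interior_smul₀ ht.ne' C).symm ▸ smul_mem_smul_set hx)

theorem frontier_diff_zero_eq_image_frontier_slice {C : Set E} (hC : IsClosed C)
    (hsmul : ∀ x ∈ C, ∀ t : ℝ, 0 ≤ t → t • x ∈ C) {f : E →L[ℝ] ℝ}
    (hf : ∀ x ∈ C, x ≠ 0 → 0 < f x) {e : E} (he : f e = 1) :
    frontier C \ {0} = (fun p : LinearMap.ker (f : E →ₗ[ℝ] ℝ) × ℝ => p.2 • (e + (p.1 : E))) ''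
      (frontier ((fun v : LinearMap.ker (f : E →ₗ[ℝ] ℝ) => e + (v : E)) ⁻¹' C) ×ˢ Ioi (0 : ℝ)) := by
  set ι : LinearMap.ker (f : E →ₗ[ℝ] ℝ) → E := fun v => e + v
  have hι : Continuous ι := continuous_const.add continuous_subtype_val
  -- `π` projects along `e` onto `ker f`, so that `ι (π y) = y` on the slice `f y = 1`
  let π : E →L[ℝ] LinearMap.ker (f : E →ₗ[ℝ] ℝ) :=
    (ContinuousLinearMap.id ℝ E - f.smulRight e).codRestrict _ fun z => by simp [he]
  have hπ : ∀ y, f y ≠ 0 → ι (π ((f y)⁻¹ • y)) = (f y)⁻¹ • y := fun y hy => by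
    have h1 : f ((f y)⁻¹ • y) = 1 := by simp [hy]
    change e + ((f y)⁻¹ • y - f ((f y)⁻¹ • y) • e) = _
    rw [h1, one_smul, add_sub_cancel]
  ext z
  constructor
  · rintro ⟨hz, hz0⟩
    have hzC : z ∈ C := hC.frontier_subset hz
    have hfz : 0 < f z := hf z hzC hz0
    refine ⟨(π ((f z)⁻¹ • z), f z), ⟨?_, hfz⟩, ?_⟩
    · rw [(hC.preimage hι).frontier_eq]
      refine ⟨?_, fun hint => disjoint_left.1 disjoint_interior_frontier ?_ hz⟩
      · show ι _ ∈ C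
        rw [hπ z hfz.ne']
        exact hsmul z hzC _ (inv_nonneg.2 hfz.le)
      · refine mem_interior_iff_mem_nhds.2 ?_
        have hcont : ContinuousAt (fun y => π ((f y)⁻¹ • y)) z :=
          π.continuous.continuousAt.comp
            (((f.continuous.continuousAt).inv₀ hfz.ne').smul continuousAt_id)
        filter_upwards [hcont.preimage_mem_nhds (isOpen_interior.mem_nhds hint),
          f.continuous.continuousAt.preimage_mem_nhds (isOpen_Ioi.mem_nhds hfz)] with y hy hfy
        have hfy : 0 < f y := hfy
        have hyC : π ((f y)⁻¹ • y) ∈ ι ⁻¹' C := interior_subset hy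
        rw [mem_preimage, hπ y hfy.ne'] at hyC
        simpa [smul_inv_smul₀ hfy.ne'] using hsmul _ hyC (f y) hfy.le
    · show f z • ι _ = z
      rw [hπ z hfz.ne', smul_inv_smul₀ hfz.ne']
  · rintro ⟨⟨v, t⟩, ⟨hv, ht⟩, rfl⟩
    have ht : 0 < t := ht
    rw [(hC.preimage hι).frontier_eq] at hv
    refine ⟨?_, fun h0 => ?_⟩
    · rw [hC.frontier_eq]
      refine ⟨hsmul _ hv.1 t ht.le, fun hint => hv.2 ?_⟩
      have hιv : ι v ∈ interior C := by
        simpa [ht.ne'] using smul_mem_interior_of_forall_smul_mem hsmul hint (inv_pos.2 ht)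
      exact interior_maximal (preimage_mono interior_subset) (isOpen_interior.preimage hι) hιv
    · have := congrArg f h0
      simp [he, ht.ne'] at this

end Slice

namespace ProperCone

variable {E : Type*} [NormedAddCommGroup E] [InnerProductSpace ℝ E]

theorem zero_notMem_interior [Nontrivial E] {K : ProperCone ℝ E}
    (hK : (K : ConvexCone ℝ E).Salient) : (0 : E) ∉ interior (K : Set E) := by
  intro h
  have hnhds : ∀ᶠ v in 𝓝[≠] (0 : E), v ∈ K ∧ -v ∈ K := by
    refine nhdsWithin_le_nhds ?_
    filter_upwards [mem_interior_iff_mem_nhds.1 h,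
      (continuous_neg.tendsto' (0 : E) 0 neg_zero) (mem_interior_iff_mem_nhds.1 h)] with v hv hnv
    exact ⟨hv, hnv⟩
  obtain ⟨v, ⟨hv, hnv⟩, hv0⟩ := (hnhds.and self_mem_nhdsWithin).exists
  exact hK v hv hv0 hnv

variable [FiniteDimensional ℝ E]

theorem span_innerDual_eq_top {K : ProperCone ℝ E} (hK : (K : ConvexCone ℝ E).Salient) :
    Submodule.span ℝ (innerDual (K : Set E) : Set E) = ⊤ := by
  rw [← Submodule.orthogonal_eq_bot_iff, Submodule.eq_bot_iff]
  intro v hv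
  have horth : ∀ u ∈ innerDual (K : Set E), ⟪u, v⟫ = 0 := fun u hu =>
    (Submodule.mem_orthogonal _ v).1 hv u (Submodule.subset_span hu)
  have hvK : v ∈ K := by
    rw [← innerDual_innerDual K, mem_innerDual]
    exact fun u hu => (horth u hu).ge
  have hnvK : -v ∈ K := by
    rw [← innerDual_innerDual K, mem_innerDual]
    exact fun u hu => by rw [inner_neg_right, horth u hu, neg_zero]
  by_contra hv0
  exact hK v hvK hv0 hnvK

theorem interior_innerDual_nonempty {K : ProperCone ℝ E} (hK : (K : ConvexCone ℝ E).Salient) :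
    (interior (innerDual (K : Set E) : Set E)).Nonempty := by
  rw [(innerDual _).convex.interior_nonempty_iff_affineSpan_eq_top,
    ← AffineSubspace.coe_eq_univ_iff]
  have := affineSpan_insert_zero (k := ℝ) (innerDual (K : Set E) : Set E)
  rwa [insert_eq_of_mem (zero_mem (innerDual (K : Set E))), span_innerDual_eq_top hK,
    Submodule.top_coe] at this

theorem exists_forall_mul_norm_le {K : ProperCone ℝ E} (hK : (K : ConvexCone ℝ E).Salient) :
    ∃ f : E →L[ℝ] ℝ, ∃ c > 0, ∀ x ∈ K, c * ‖x‖ ≤ f x := by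
  obtain ⟨f₀, hf₀⟩ := interior_innerDual_nonempty hK
  obtain ⟨ε, hε, hball⟩ := nhds_basis_closedBall.mem_iff.1 (mem_interior_iff_mem_nhds.1 hf₀)
  refine ⟨innerSL ℝ f₀, ε, hε, fun x hx => ?_⟩
  rcases eq_or_ne x 0 with rfl | hx0
  · simp
  have hxn : 0 < ‖x‖ := norm_pos_iff.2 hx0
  have hu : f₀ - (ε / ‖x‖) • x ∈ innerDual (K : Set E) := hball <| by
    rw [mem_closedBall, dist_eq_norm, sub_sub_cancel_left, norm_neg, norm_smul, Real.norm_eq_abs,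
      abs_of_pos (div_pos hε hxn), div_mul_cancel₀ _ hxn.ne']
  have := mem_innerDual.1 hu hx
  rw [inner_sub_right, real_inner_smul_right, real_inner_self_eq_norm_sq] at this
  rw [innerSL_apply_apply, real_inner_comm]
  calc ε * ‖x‖ = ε / ‖x‖ * ‖x‖ ^ 2 := by field_simp
    _ ≤ ⟪x, f₀⟫ := by linarith

theorem isPreconnected_frontier_diff_zero (hE : 2 < finrank ℝ E) {K : ProperCone ℝ E}
    (hK : (K : ConvexCone ℝ E).Salient) (hKi : (interior (K : Set E)).Nonempty) :
    IsPreconnected (frontier (K : Set E) \ {0}) := by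
  have : Nontrivial E := Module.nontrivial_of_finrank_pos (R := ℝ) (by omega)
  obtain ⟨f, c, hc, hfc⟩ := exists_forall_mul_norm_le hK
  have hfpos : ∀ x ∈ K, x ≠ 0 → 0 < f x := fun x hx hx0 =>
    (mul_pos hc (norm_pos_iff.2 hx0)).trans_le (hfc x hx)
  have hsmul : ∀ x ∈ K, ∀ t : ℝ, 0 ≤ t → t • x ∈ K := fun x hx t ht => K.smul_mem hx ht
  obtain ⟨e₀, he₀⟩ := hKi
  have hfe₀ : 0 < f e₀ :=
    hfpos e₀ (interior_subset he₀) (ne_of_mem_of_not_mem he₀ (zero_notMem_interior hK))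
  set e := (f e₀)⁻¹ • e₀
  have he : e ∈ interior (K : Set E) :=
    smul_mem_interior_of_forall_smul_mem hsmul he₀ (inv_pos.2 hfe₀)
  have hfe : f e = 1 := by simp [e, hfe₀.ne']
  rw [frontier_diff_zero_eq_image_frontier_slice K.isClosed hsmul hfpos hfe]
  refine (IsPreconnected.prod ?_ isPreconnected_Ioi).image _
    (by fun_prop : Continuous _).continuousOn
  set ι : LinearMap.ker (f : E →ₗ[ℝ] ℝ) → E := fun v => e + v
  have hι : Continuous ι := continuous_const.add continuous_subtype_val
  apply Convex.isPreconnected_frontier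
  · have hf0 : (f : E →ₗ[ℝ] ℝ) ≠ 0 := fun h => by
      simpa [hfe] using LinearMap.congr_fun h e
    have := Module.Dual.finrank_ker_add_one_of_ne_zero hf0
    rw [← finrank_eq_rank]
    exact_mod_cast (by omega : 1 < finrank ℝ (LinearMap.ker (f : E →ₗ[ℝ] ℝ)))
  · exact (K.convex.translate_preimage_right e).linear_preimage (Submodule.subtype _)
  · exact ⟨0, interior_maximal (preimage_mono interior_subset) (isOpen_interior.preimage hι)
      (by simpa [ι] using he)⟩
  · refine isBounded_iff_forall_norm_le.2 ⟨1 / c + ‖e‖, fun v hv => ?_⟩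
    have h1 : c * ‖ι v‖ ≤ 1 := by simpa [ι, hfe] using hfc _ hv
    have h2 : ‖ι v‖ ≤ 1 / c := (le_div_iff₀ hc).2 (by linarith)
    calc ‖v‖ = ‖ι v - e‖ := by simp [ι]
      _ ≤ ‖ι v‖ + ‖e‖ := norm_sub_le _ _
      _ ≤ 1 / c + ‖e‖ := by linarith

theorem le_or_le_or_inf_eq_bot (hE : 2 < finrank ℝ E) {K L : ProperCone ℝ E}
    (hK : (K : ConvexCone ℝ E).Salient) (hL : (L : ConvexCone ℝ E).Salient)
    (hKi : (interior (K : Set E)).Nonempty) (hLi : (interior (L : Set E)).Nonempty)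
    (hbd : frontier (K : Set E) ∩ frontier (L : Set E) ⊆ {0}) :
    K ≤ L ∨ L ≤ K ∨ K ⊓ L = ⊥ := by
  have : Nontrivial E := Module.nontrivial_of_finrank_pos (R := ℝ) (by omega)
  by_contra! h
  obtain ⟨hKL, hLK, hKL0⟩ := h
  obtain ⟨a, haK, haL⟩ := SetLike.not_le_iff_exists.1 hKL
  obtain ⟨b, hbL, hbK⟩ := SetLike.not_le_iff_exists.1 hLK
  obtain ⟨x, hx, hx0⟩ : ∃ x ∈ K ⊓ L, x ≠ 0 := by
    by_contra! h0
    exact hKL0 (eq_bot_iff.2 fun x hx => h0 x hx)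
  -- `x` is not on both frontiers, so it is interior to one of the cones
  obtain ⟨w, hwK, hwL⟩ : (interior (K : Set E) ∩ interior (L : Set E)).Nonempty := by
    by_cases hxK : x ∈ interior (K : Set E)
    · exact L.convex.interior_inter_interior_nonempty hLi ⟨hxK, hx.2⟩
    have hxL : x ∈ interior (L : Set E) := by
      by_contra hxL
      exact hx0 (hbd ⟨K.isClosed.frontier_eq ▸ ⟨hx.1, hxK⟩, L.isClosed.frontier_eq ▸ ⟨hx.2, hxL⟩⟩)
    rw [inter_comm]
    exact K.convex.interior_inter_interior_nonempty hKi ⟨hxL, hx.1⟩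
  obtain ⟨p, hp⟩ := K.convex.interior_inter_frontier_nonempty L.isClosed haK haL
    ⟨hwK, interior_subset hwL⟩
  obtain ⟨q, hq⟩ := L.convex.interior_inter_frontier_nonempty K.isClosed hbL hbK
    ⟨hwL, interior_subset hwK⟩
  have hpre := isPreconnected_frontier_diff_zero hE (K := K ⊓ L)
    (fun y hy hy0 hny => hK y hy.1 hy0 hny.1) ⟨w, by simpa [interior_inter] using ⟨hwK, hwL⟩⟩
  rcases interior_inter_frontier_subset_or_frontier_inter_interior_subset hpre hbd with h | h
  · exact zero_notMem_interior hK (h hp ▸ hp.1)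
  · exact zero_notMem_interior hL (h ⟨hq.2, hq.1⟩ ▸ hq.1)

end ProperCone

namespace IsSolidPointedCone

variable {o : EuclideanSpace ℝ (Fin 3)} {C : Set (EuclideanSpace ℝ (Fin 3))}

theorem smul_add_mem (hC : IsSolidPointedCone o C) {x : EuclideanSpace ℝ (Fin 3)}
    (hx : x + o ∈ C) {t : ℝ} (ht : 0 ≤ t) : t • x + o ∈ C := by
  simpa [add_comm] using hC.2.2.2.1 _ hx t ht

def toProperCone (hC : IsSolidPointedCone o C) : ProperCone ℝ (EuclideanSpace ℝ (Fin 3)) where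
  carrier := (· + o) ⁻¹' C
  add_mem' {x y} hx hy := by
    have hmid : (1 / 2 : ℝ) • (x + y) + o ∈ C := by
      convert hC.2.1 hx hy (by norm_num : (0 : ℝ) ≤ 1 / 2) (by norm_num : (0 : ℝ) ≤ 1 / 2)
        (by norm_num) using 1
      module
    simpa [smul_smul] using hC.smul_add_mem hmid (by norm_num : (0 : ℝ) ≤ 2)
  zero_mem' := by
    obtain ⟨y, hy⟩ := hC.2.2.1
    simpa using hC.smul_add_mem (x := y - o) (by simpa using interior_subset hy) le_rfl
  smul_mem' c x hx := hC.smul_add_mem hx c.2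
  isClosed' := hC.1.preimage (continuous_add_const o)

theorem coe_toProperCone (hC : IsSolidPointedCone o C) :
    (hC.toProperCone : Set (EuclideanSpace ℝ (Fin 3))) = (· + o) ⁻¹' C := rfl

theorem salient_toProperCone (hC : IsSolidPointedCone o C) :
    (hC.toProperCone : ConvexCone ℝ (EuclideanSpace ℝ (Fin 3))).Salient := by
  intro x hx hx0 hnx
  have hx' : x + o ∈ C := hx
  have hnx' : (2 : ℝ) • o - (x + o) ∈ C := by
    have : -x + o ∈ C := hnx
    convert this using 1
    module
  exact hx0 (by simpa using hC.2.2.2.2 _ hx' hnx')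

theorem interior_toProperCone_nonempty (hC : IsSolidPointedCone o C) :
    (interior (hC.toProperCone : Set (EuclideanSpace ℝ (Fin 3)))).Nonempty := by
  obtain ⟨y, hy⟩ := hC.2.2.1
  refine ⟨y - o, ?_⟩
  rw [coe_toProperCone, ← Homeomorph.coe_addRight, ← Homeomorph.preimage_interior]
  simpa using hy

end IsSolidPointedCone

/-- Two solid pointed closed convex cones in `ℝ³` with the same
apex `o` whose boundaries meet only (at most) at `o` are nested or meet only
at `o`. -/
theorem cones_with_trivial_boundary_intersection
    (o : EuclideanSpace ℝ (Fin 3)) (A B : Set (EuclideanSpace ℝ (Fin 3)))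
    (hA : IsSolidPointedCone o A) (hB : IsSolidPointedCone o B)
    (hbd : frontier A ∩ frontier B ⊆ {o}) :
    A ⊆ B ∨ B ⊆ A ∨ A ∩ B = {o} := by
  have htr : Function.Surjective (· + o : EuclideanSpace ℝ (Fin 3) → _) := add_right_surjective o
  have hbd₀ : frontier (hA.toProperCone : Set (EuclideanSpace ℝ (Fin 3))) ∩
      frontier (hB.toProperCone : Set (EuclideanSpace ℝ (Fin 3))) ⊆ {0} := by
    rintro z ⟨hzA, hzB⟩
    simp only [IsSolidPointedCone.coe_toProperCone, ← Homeomorph.coe_addRight,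
      ← Homeomorph.preimage_frontier] at hzA hzB
    simpa using hbd ⟨hzA, hzB⟩
  rcases ProperCone.le_or_le_or_inf_eq_bot (by simp) hA.salient_toProperCone
    hB.salient_toProperCone hA.interior_toProperCone_nonempty hB.interior_toProperCone_nonempty
    hbd₀ with h | h | h
  · exact Or.inl (htr.preimage_subset_preimage_iff.1 h)
  · exact Or.inr (Or.inl (htr.preimage_subset_preimage_iff.1 h))
  · refine Or.inr (Or.inr (htr.preimage_injective ?_))
    calc (· + o) ⁻¹' (A ∩ B)
        = ((hA.toProperCone ⊓ hB.toProperCone : ProperCone ℝ _) : Set _) := rfl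
      _ = {0} := by rw [h, ProperCone.coe_bot]
      _ = (· + o) ⁻¹' {o} := by ext; simp
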